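/- For the numeral system defined by 0̃ = I and ñ = λx.(x x … x) (the variable x applied to n copies of itself, i.e. x occurs n+1 times) for n ≥ 1, the closed λ-terms S̃ = λn λx.(n x x), Z̃ = λn.(n A I I T) where A = λxλy.(y x), and P̃ = λn λx.(n U F) where U = λy.(y V I) and V = λaλbλcλd.(d a (c x)), are respectively a Successor, a Zero Test, and a Predecessor for this numeral system: (S̃ ñ) ≃β (n+1)~ for all n, (Z̃ 0̃) ≃β T and (Z̃ (n+1)~) ≃β F for all n, and (P̃ (n+1)~) ≃β ñ for all n. -/

import Mathlib

/-
The numeral `ñ` applied to `X` reduces to `X X ⋯ X` (`n + 1` copies of `X`), hence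
`S̃ ñ ≃β λx. ñ x x ≃β λx. x x ⋯ x x`.

For the zero test, `A X Y ≃β Y X` makes every product `A A ⋯ A` collapse to `A A`, and
`A A I I T ≃β I A I T ≃β A I T ≃β T I ≃β F`, whereas `0̃ A I I T ≃β A I I T ≃β I I T ≃β T`.

For the predecessor, `U` is the pair `⟨V, I⟩` and `V V b c ≃β ⟨V, c x⟩`, so
`⟨V, B⟩ U ≃β U V B ≃β V V I B ≃β ⟨V, B x⟩`. Thus `U U ⋯ U ≃β ⟨V, x ⋯ x⟩` with one `x` fewer
than there are `U`s, and applying it to `F` projects out `x ⋯ x`.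
-/

/-- Untyped λ-terms in de Bruijn notation. -/
inductive Lam : Type
  | var : ℕ → Lam
  | app : Lam → Lam → Lam
  | lam : Lam → Lam
  deriving DecidableEq

namespace Lam

/-- Shift by one the free variables with index ≥ `d`. -/
def lift (d : ℕ) : Lam → Lam
  | var n => if n < d then var n else var (n + 1)
  | app M N => app (lift d M) (lift d N)
  | lam M => lam (lift (d + 1) M)

/-- Capture-avoiding substitution of `N` for the free variable of index `n`. -/
def subst : Lam → ℕ → Lam → Lam
  | var m, n, N => if m = n then N else if n < m then var (m - 1) else var m
  | app M₁ M₂, n, N => app (subst M₁ n N) (subst M₂ n N)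
  | lam M, n, N => lam (subst M (n + 1) (lift 0 N))

/-- One-step β-reduction (contraction of a β-redex anywhere in the term). -/
inductive Step : Lam → Lam → Prop
  | beta (M N : Lam) : Step (app (lam M) N) (subst M 0 N)
  | appL {M M' : Lam} (N : Lam) : Step M M' → Step (app M N) (app M' N)
  | appR (M : Lam) {N N' : Lam} : Step N N' → Step (app M N) (app M N')
  | lam {M M' : Lam} : Step M M' → Step (Lam.lam M) (Lam.lam M')

/-- β-equivalence: the equivalence relation generated by one-step β-reduction. -/
def BetaEq : Lam → Lam → Prop := Relation.EqvGen Step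

/-- The variable of index `n` occurs free in the term. -/
def HasFree : Lam → ℕ → Prop
  | var m, n => m = n
  | app M N, n => HasFree M n ∨ HasFree N n
  | lam M, n => HasFree M (n + 1)

/-- A term is closed if it has no free variables. -/
def Closed (M : Lam) : Prop := ∀ n, ¬ HasFree M n

/-- A term is β-normal: it contains no β-redex. -/
def IsBetaNormal : Lam → Prop
  | app (lam _) _ => False
  | app M N => IsBetaNormal M ∧ IsBetaNormal N
  | lam M => IsBetaNormal M
  | var _ => True

/-- A term is βη-normal: it contains no β-redex and no η-redex
`λx.(M x)` with `x` not free in `M`. -/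
def IsBetaEtaNormal : Lam → Prop
  | app (lam _) _ => False
  | app M N => IsBetaEtaNormal M ∧ IsBetaEtaNormal N
  | lam (app M (var 0)) => HasFree M 0 ∧ IsBetaEtaNormal (app M (var 0))
  | lam M => IsBetaEtaNormal M
  | var _ => True

/-- `I = λx.x`. -/
def I : Lam := lam (var 0)

/-- `T = λxλy.x`. -/
def T : Lam := lam (lam (var 1))

/-- `F = λxλy.y`. -/
def F : Lam := lam (lam (var 0))

/-- The pair `<M,N> = λx.(x M N)` (the binder shifts the free variables of `M,N`). -/
def pair (M N : Lam) : Lam := lam (app (app (var 0) (lift 0 M)) (lift 0 N))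

end Lam

/-- `x x … x` : the variable `x` (de Bruijn index 0) applied to `n` copies of itself
(`x` occurs `n + 1` times). -/
def Lam.selfApps : ℕ → Lam
  | 0 => Lam.var 0
  | n + 1 => Lam.app (Lam.selfApps n) (Lam.var 0)

/-- The numeral system `tilde` : `0̃ = I` and, for `n ≥ 1`, `ñ = λx.(x x … x)`
where `x` occurs `n + 1` times. -/
def Lam.tilde : ℕ → Lam
  | 0 => Lam.I
  | n + 1 => Lam.lam (Lam.selfApps (n + 1))

namespace Lam

local infixl:100 " ⬝ " => Lam.app
local infix:50 " ≃β " => Lam.BetaEq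

section BetaEq

variable {M M' N N' P : Lam}

theorem BetaEq.refl (M : Lam) : M ≃β M := Relation.EqvGen.refl M

theorem BetaEq.trans (h : M ≃β N) (h' : N ≃β P) : M ≃β P := Relation.EqvGen.trans _ _ _ h h'

instance : Trans BetaEq BetaEq BetaEq := ⟨BetaEq.trans⟩

theorem BetaEq.beta (M N : Lam) : lam M ⬝ N ≃β subst M 0 N := .rel _ _ (.beta M N)

theorem BetaEq.map {f : Lam → Lam} (hf : ∀ {M N}, Step M N → Step (f M) (f N)) (h : M ≃β N) :
    f M ≃β f N := by
  induction h with
  | rel _ _ h => exact .rel _ _ (hf h)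
  | refl => exact .refl _
  | symm _ _ _ ih => exact .symm _ _ ih
  | trans _ _ _ _ _ ih ih' => exact ih.trans ih'

theorem BetaEq.app_left (N : Lam) (h : M ≃β M') : M ⬝ N ≃β M' ⬝ N := h.map (.appL N)

theorem BetaEq.app_right (M : Lam) (h : N ≃β N') : M ⬝ N ≃β M ⬝ N' := h.map (.appR M)

theorem BetaEq.lam (h : M ≃β M') : lam M ≃β lam M' := h.map .lam

end BetaEq

theorem subst_lift (M N : Lam) (n : ℕ) : subst (lift n M) n N = M := by
  induction M generalizing n N with
  | var m =>
    rcases lt_or_ge m n with h | h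
    · simp [lift, subst, h, h.ne, not_lt.mpr h.le]
    · simp [lift, subst, not_lt.mpr h, Nat.lt_succ_of_le h]
      omega
  | app M₁ M₂ ih₁ ih₂ => simp only [lift, subst, ih₁, ih₂]
  | lam M ih => simp only [lift, subst, ih]

/-- `M M ⋯ M`, with `k + 1` copies of `M`. -/
def selfAppsOf (M : Lam) : ℕ → Lam
  | 0 => M
  | k + 1 => selfAppsOf M k ⬝ M

theorem subst_selfApps (k : ℕ) (N : Lam) : subst (selfApps k) 0 N = selfAppsOf N k := by
  induction k with
  | zero => rfl
  | succ k ih => simp only [selfApps, subst, ih, ↓reduceIte, selfAppsOf]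

theorem selfAppsOf_var_zero (k : ℕ) : selfAppsOf (var 0) k = selfApps k := by
  induction k with
  | zero => rfl
  | succ k ih => simp only [selfAppsOf, selfApps, ih]

theorem lift_succ_selfApps (d k : ℕ) : lift (d + 1) (selfApps k) = selfApps k := by
  induction k with
  | zero => simp [selfApps, lift]
  | succ k ih => simp [selfApps, lift, ih]

theorem tilde_eq_lam_selfApps (n : ℕ) : tilde n = lam (selfApps n) := by
  cases n <;> rfl

theorem lift_tilde (d n : ℕ) : lift d (tilde n) = tilde n := by
  rw [tilde_eq_lam_selfApps, lift, lift_succ_selfApps]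

theorem tilde_app (n : ℕ) (X : Lam) : tilde n ⬝ X ≃β selfAppsOf X n := by
  rw [tilde_eq_lam_selfApps, ← subst_selfApps]
  exact .beta _ _

theorem selfAppsOf_succ_betaEq {X : Lam} (f : ℕ → Lam) (h₀ : X ⬝ X ≃β f 0)
    (hs : ∀ k, f k ⬝ X ≃β f (k + 1)) (k : ℕ) : selfAppsOf X (k + 1) ≃β f k := by
  induction k with
  | zero => exact h₀
  | succ k ih => exact (ih.app_left X).trans (hs k)

theorem I_app (M : Lam) : I ⬝ M ≃β M := .beta _ _

theorem T_app (M : Lam) : T ⬝ M ≃β lam (lift 0 M) := .beta _ _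

theorem F_app_app (M N : Lam) : F ⬝ M ⬝ N ≃β N :=
  ((BetaEq.beta _ _).app_left N).trans (I_app N)

theorem pair_app (M N X : Lam) : pair M N ⬝ X ≃β X ⬝ M ⬝ N := by
  have h := BetaEq.beta (var 0 ⬝ lift 0 M ⬝ lift 0 N) X
  simpa only [pair, subst, ↓reduceIte, subst_lift] using h

theorem pair_app_F (M N : Lam) : pair M N ⬝ F ≃β N :=
  (pair_app M N F).trans (F_app_app M N)

def A : Lam := lam (lam (var 0 ⬝ var 1))

theorem A_app_app (M N : Lam) : A ⬝ M ⬝ N ≃β N ⬝ M := by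
  have h := BetaEq.beta (var 0 ⬝ lift 0 M) N
  rw [subst, subst_lift] at h
  exact ((BetaEq.beta _ _).app_left N).trans h

theorem selfAppsOf_A (k : ℕ) : selfAppsOf A (k + 1) ≃β A ⬝ A :=
  selfAppsOf_succ_betaEq (fun _ => A ⬝ A) (.refl _) (fun _ => A_app_app A A) k

/- `V` and `U` live under the binder `λx` of `P̃`: `x` is the free variable `var 0`. -/
def V : Lam := lam (lam (lam (lam (var 0 ⬝ var 3 ⬝ (var 1 ⬝ var 4)))))

def U : Lam := pair V I

theorem V_app (b c : Lam) : V ⬝ V ⬝ b ⬝ c ≃β pair V (c ⬝ var 0) :=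
  ((((BetaEq.beta _ _).app_left b).app_left c).trans
    (((BetaEq.beta _ _).app_left c).trans (BetaEq.beta _ _)))

theorem pair_V_app_U (B : Lam) : pair V B ⬝ U ≃β pair V (B ⬝ var 0) :=
  calc pair V B ⬝ U ≃β U ⬝ V ⬝ B := pair_app V B U
    _ ≃β V ⬝ V ⬝ I ⬝ B := (pair_app V I V).app_left B
    _ ≃β pair V (B ⬝ var 0) := V_app I B

theorem selfAppsOf_U (k : ℕ) : selfAppsOf U (k + 1) ≃β pair V (selfApps k) := by
  refine selfAppsOf_succ_betaEq (fun k => pair V (selfApps k)) ?_ (fun _ => pair_V_app_U _) k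
  calc U ⬝ U ≃β pair V (I ⬝ var 0) := pair_V_app_U I
    _ ≃β pair V (var 0) := ((I_app (var 1)).app_right _).lam

def tildeSucc : Lam := lam (lam (var 1 ⬝ var 0 ⬝ var 0))

def tildeIsZero : Lam := lam (var 0 ⬝ A ⬝ I ⬝ I ⬝ T)

def tildePred : Lam := lam (lam (var 1 ⬝ U ⬝ F))

theorem closed_tildeSucc : Closed tildeSucc := by
  simp [Closed, tildeSucc, HasFree]

theorem closed_tildeIsZero : Closed tildeIsZero := by
  simp [Closed, tildeIsZero, A, I, T, HasFree]

theorem closed_tildePred : Closed tildePred := by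
  simp [Closed, tildePred, U, V, pair, lift, I, F, HasFree]

theorem tildeSucc_app_tilde (n : ℕ) : tildeSucc ⬝ tilde n ≃β tilde (n + 1) :=
  calc tildeSucc ⬝ tilde n ≃β lam (lift 0 (tilde n) ⬝ var 0 ⬝ var 0) := .beta _ _
    _ = lam (tilde n ⬝ var 0 ⬝ var 0) := by rw [lift_tilde]
    _ ≃β lam (selfAppsOf (var 0) n ⬝ var 0) := ((tilde_app n (var 0)).app_left _).lam
    _ = tilde (n + 1) := by rw [selfAppsOf_var_zero, tilde_eq_lam_selfApps]; rfl

theorem tildeIsZero_app_tilde_zero : tildeIsZero ⬝ tilde 0 ≃β T :=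
  calc tildeIsZero ⬝ tilde 0 ≃β I ⬝ A ⬝ I ⬝ I ⬝ T := .beta _ _
    _ ≃β A ⬝ I ⬝ I ⬝ T := (((I_app A).app_left I).app_left I).app_left T
    _ ≃β I ⬝ I ⬝ T := (A_app_app I I).app_left T
    _ ≃β I ⬝ T := (I_app I).app_left T
    _ ≃β T := I_app T

theorem tildeIsZero_app_tilde_succ (n : ℕ) : tildeIsZero ⬝ tilde (n + 1) ≃β F :=
  calc tildeIsZero ⬝ tilde (n + 1) ≃β tilde (n + 1) ⬝ A ⬝ I ⬝ I ⬝ T := .beta _ _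
    _ ≃β A ⬝ A ⬝ I ⬝ I ⬝ T :=
      ((((tilde_app (n + 1) A).trans (selfAppsOf_A n)).app_left I).app_left I).app_left T
    _ ≃β I ⬝ A ⬝ I ⬝ T := ((A_app_app A I).app_left I).app_left T
    _ ≃β A ⬝ I ⬝ T := ((I_app A).app_left I).app_left T
    _ ≃β T ⬝ I := A_app_app I T
    _ ≃β F := T_app I

theorem tildePred_app_tilde_succ (n : ℕ) : tildePred ⬝ tilde (n + 1) ≃β tilde n :=
  calc tildePred ⬝ tilde (n + 1) ≃β lam (lift 0 (tilde (n + 1)) ⬝ U ⬝ F) := .beta _ _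
    _ = lam (tilde (n + 1) ⬝ U ⬝ F) := by rw [lift_tilde]
    _ ≃β lam (pair V (selfApps n) ⬝ F) :=
      (((tilde_app (n + 1) U).trans (selfAppsOf_U n)).app_left F).lam
    _ ≃β lam (selfApps n) := (pair_app_F V (selfApps n)).lam
    _ = tilde n := (tilde_eq_lam_selfApps n).symm

end Lam

/-- For the numeral system `tilde` (`0̃ = I`, `ñ = λx.(x x … x)` with `x` occurring
`n+1` times), the terms `S̃ = λn λx.(n x x)`, `Z̃ = λn.(n A I I T)` with `A = λxλy.(y x)`,
and `P̃ = λn λx.(n U F)` with `U = λy.(y V I)` and `V = λaλbλcλd.(d a (c x))`, are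
respectively a Successor, a Zero Test and a Predecessor. -/
theorem statement7 :
    (Lam.Closed (Lam.lam (Lam.lam (Lam.app (Lam.app (Lam.var 1) (Lam.var 0)) (Lam.var 0)))) ∧
      ∀ n, Lam.BetaEq (Lam.app (Lam.lam (Lam.lam (Lam.app (Lam.app (Lam.var 1) (Lam.var 0)) (Lam.var 0)))) (Lam.tilde n)) (Lam.tilde (n + 1))) ∧
    (Lam.Closed (Lam.lam (Lam.app (Lam.app (Lam.app (Lam.app (Lam.var 0) (Lam.lam (Lam.lam (Lam.app (Lam.var 0) (Lam.var 1))))) Lam.I) Lam.I) Lam.T)) ∧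
      Lam.BetaEq (Lam.app (Lam.lam (Lam.app (Lam.app (Lam.app (Lam.app (Lam.var 0) (Lam.lam (Lam.lam (Lam.app (Lam.var 0) (Lam.var 1))))) Lam.I) Lam.I) Lam.T)) (Lam.tilde 0)) Lam.T ∧
      ∀ n, Lam.BetaEq (Lam.app (Lam.lam (Lam.app (Lam.app (Lam.app (Lam.app (Lam.var 0) (Lam.lam (Lam.lam (Lam.app (Lam.var 0) (Lam.var 1))))) Lam.I) Lam.I) Lam.T)) (Lam.tilde (n + 1))) Lam.F) ∧
    (Lam.Closed (Lam.lam (Lam.lam (Lam.app (Lam.app (Lam.var 1) (Lam.lam (Lam.app (Lam.app (Lam.var 0) (Lam.lam (Lam.lam (Lam.lam (Lam.lam (Lam.app (Lam.app (Lam.var 0) (Lam.var 3)) (Lam.app (Lam.var 1) (Lam.var 5)))))))) Lam.I))) Lam.F))) ∧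
      ∀ n, Lam.BetaEq (Lam.app (Lam.lam (Lam.lam (Lam.app (Lam.app (Lam.var 1) (Lam.lam (Lam.app (Lam.app (Lam.var 0) (Lam.lam (Lam.lam (Lam.lam (Lam.lam (Lam.app (Lam.app (Lam.var 0) (Lam.var 3)) (Lam.app (Lam.var 1) (Lam.var 5)))))))) Lam.I))) Lam.F))) (Lam.tilde (n + 1))) (Lam.tilde n)) :=
  ⟨⟨Lam.closed_tildeSucc, Lam.tildeSucc_app_tilde⟩,
    ⟨Lam.closed_tildeIsZero, Lam.tildeIsZero_app_tilde_zero, Lam.tildeIsZero_app_tilde_succ⟩,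
    ⟨Lam.closed_tildePred, Lam.tildePred_app_tilde_succ⟩⟩
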